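/- arXiv:1512.02720 — 5 statements merged into one kernel-verified Lean document; each statement's English description precedes it below -/
import Mathlib

section
/- Let R be a commutative ring with elements x, y, z, and for m ≥ 1 let U_m be the m×m matrix over R whose (i,j) entry (with 1-based indices) is x if i+j = m, z if i+j = m+1, y if i+j = m+2, and 0 otherwise. Set d_{-1} = 0, d_0 = 1, and d_m = det(U_m) for m ≥ 1. Then for every m ≥ 1 one has d_m = (-1)^{m-1} z d_{m-1} + x y d_{m-2}. -/
/-- The `m × m` matrix `U_m` over a commutative ring `R` with distinguished elements
`x, y, z`: its `(i,j)` entry (with 1-based indices) is `x` if `i + j = m`,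
`z` if `i + j = m + 1`, `y` if `i + j = m + 2`, and `0` otherwise. -/
def Umat {R : Type*} [CommRing R] (x y z : R) (m : ℕ) : Matrix (Fin m) (Fin m) R :=
  Matrix.of fun i j =>
    if (i : ℕ) + (j : ℕ) + 2 = m then x
    else if (i : ℕ) + (j : ℕ) + 2 = m + 1 then z
    else if (i : ℕ) + (j : ℕ) + 2 = m + 2 then y
    else 0

/-- `d_m = det U_m`; in particular `d_0 = 1` (determinant of the empty matrix). -/
noncomputable def dSeq {R : Type*} [CommRing R] (x y z : R) (m : ℕ) : R :=
  (Umat x y z m).det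

/-!
Expand `det U_{n+2}` along its last column, whose only nonzero entries are `z` (first row) and
`y` (second row). Deleting the first row and the last column leaves `U_{n+1}`. Deleting the
second row and the last column leaves a matrix whose first row is `x` times the last unit
vector, and expanding along that row leaves `U_n`; the two signs `(-1)^(n+2)` and `(-1)^n`
cancel.
-/

section

variable {R : Type*} [CommRing R]

theorem Matrix.det_succ_row_of_forall_ne_eq_zero {n : ℕ}
    (A : Matrix (Fin (n + 1)) (Fin (n + 1)) R) {i j : Fin (n + 1)}
    (h : ∀ k, k ≠ j → A i k = 0) :
    A.det = (-1) ^ ((i : ℕ) + j) * A i j * (A.submatrix i.succAbove j.succAbove).det := by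
  rw [A.det_succ_row i, Finset.sum_eq_single j (fun k _ hk => by rw [h k hk]; ring) (by simp)]

namespace Umat

variable (x y z : R)

theorem submatrix_succ_castSucc (m : ℕ) :
    (Umat x y z (m + 1)).submatrix Fin.succ Fin.castSucc = Umat x y z m := by
  ext i j
  simp only [Umat, Matrix.submatrix_apply, Matrix.of_apply, Fin.val_succ, Fin.val_castSucc]
  grind

theorem submatrix_one_succAbove_castSucc_submatrix_succ_castSucc (n : ℕ) :
    ((Umat x y z (n + 2)).submatrix (1 : Fin (n + 2)).succAbove Fin.castSucc).submatrix
      Fin.succ Fin.castSucc = Umat x y z n := by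
  ext i j
  have hi : ((1 : Fin (n + 2)).succAbove i.succ : ℕ) = i + 2 := by
    simp [Fin.succAbove, Fin.lt_def]
  simp only [Umat, Matrix.submatrix_apply, Matrix.of_apply, Fin.val_castSucc, hi]
  grind

theorem apply_zero_castSucc (n : ℕ) (k : Fin (n + 1)) :
    Umat x y z (n + 2) 0 k.castSucc = if k = Fin.last n then x else 0 := by
  simp only [Umat, Matrix.of_apply, Fin.val_zero, Fin.val_castSucc, Fin.ext_iff, Fin.val_last]
  grind

theorem apply_zero_last (n : ℕ) : Umat x y z (n + 2) 0 (Fin.last (n + 1)) = z := by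
  simp only [Umat, Matrix.of_apply, Fin.val_zero, Fin.val_last]
  grind

theorem apply_one_last (n : ℕ) : Umat x y z (n + 2) 1 (Fin.last (n + 1)) = y := by
  simp only [Umat, Matrix.of_apply, Fin.val_one, Fin.val_last]
  grind

theorem apply_succ_succ_last (n : ℕ) (i : Fin n) :
    Umat x y z (n + 2) i.succ.succ (Fin.last (n + 1)) = 0 := by
  simp only [Umat, Matrix.of_apply, Fin.val_succ, Fin.val_last]
  grind

theorem det_submatrix_one_succAbove_castSucc (n : ℕ) :
    ((Umat x y z (n + 2)).submatrix (1 : Fin (n + 2)).succAbove Fin.castSucc).det =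
      (-1) ^ n * x * dSeq x y z n := by
  have hrow : ∀ k, k ≠ Fin.last n →
      (Umat x y z (n + 2)).submatrix (1 : Fin (n + 2)).succAbove Fin.castSucc 0 k = 0 := by
    intro k hk
    simp [apply_zero_castSucc, hk]
  rw [Matrix.det_succ_row_of_forall_ne_eq_zero _ hrow, Fin.succAbove_zero, Fin.succAbove_last,
    submatrix_one_succAbove_castSucc_submatrix_succ_castSucc]
  simp [apply_zero_castSucc, dSeq]

end Umat

theorem dSeq_one (x y z : R) : dSeq x y z 1 = z := by
  simp [dSeq, Umat]

theorem dSeq_add_two (x y z : R) (n : ℕ) :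
    dSeq x y z (n + 2) = (-1) ^ (n + 1) * z * dSeq x y z (n + 1) + x * y * dSeq x y z n := by
  have hsign : (-1 : R) ^ (1 + (n + 1)) * (-1) ^ n = 1 := by
    rw [← pow_add, show 1 + (n + 1) + n = 2 * (n + 1) by ring, pow_mul]
    norm_num
  rw [dSeq, Matrix.det_succ_column _ (Fin.last (n + 1)), Fin.sum_univ_succ, Fin.sum_univ_succ,
    Finset.sum_eq_zero fun i _ => by rw [Umat.apply_succ_succ_last]; ring]
  rw [Umat.apply_zero_last, Fin.succAbove_zero, Fin.succAbove_last, Umat.submatrix_succ_castSucc,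
    Fin.succ_zero_eq_one, Umat.apply_one_last, Umat.det_submatrix_one_succAbove_castSucc]
  simp only [Fin.val_zero, Fin.val_one, Fin.val_last, zero_add, add_zero, dSeq]
  linear_combination (x * y * (Umat x y z n).det) * hsign

end

/-- For every `m ≥ 1` one has `d_m = (-1)^(m-1) z d_(m-1) + x y d_(m-2)`,
where `d_(-1) = 0` (the case `m = 1`). -/
theorem dSeq_recurrence {R : Type*} [CommRing R] (x y z : R) (m : ℕ) (hm : 1 ≤ m) :
    dSeq x y z m =
      (-1 : R) ^ (m - 1) * z * dSeq x y z (m - 1) +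
        x * y * (if m = 1 then 0 else dSeq x y z (m - 2)) := by
  obtain ⟨n, rfl⟩ : ∃ n, m = n + 1 := ⟨m - 1, by omega⟩
  cases n with
  | zero => simpa [dSeq] using dSeq_one x y z
  | succ n => simpa using dSeq_add_two x y z n
end

section
/- Let (Q, 𝔫) be a regular local ring with residue field k, and let 𝔤 ⊆ 𝔫² be an 𝔫-primary ideal minimally generated by elements g_0, …, g_k. Let s_1, …, s_t be elements of Q whose classes in Q/𝔤 form a k-basis of the socle of Q/𝔤. Set 𝔞 = 𝔫·g_0 + (g_1, …, g_k). Then 𝔞 is 𝔫-primary, and if 𝔫·s_i ⊆ 𝔞 holds for all i = 1, …, t, then the classes of g_0, s_1, …, s_t in Q/𝔞 form a k-basis of the socle of Q/𝔞; in particular the type of Q/𝔞 equals the type of Q/𝔤 plus 1. -/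
/-- A commutative Noetherian local ring is *regular* if its maximal ideal can be
generated by `n` elements, where `n` is the Krull dimension of the ring. -/
def IsRegularLocal (Q : Type*) [CommRing Q] [IsLocalRing Q] : Prop :=
  IsNoetherianRing Q ∧ ∃ (n : ℕ) (f : Fin n → Q),
    Ideal.span (Set.range f) = IsLocalRing.maximalIdeal Q ∧ ringKrullDim Q = n

/-- The socle of the quotient ring `Q ⧸ 𝔞` of a local ring `(Q, 𝔫)` (with `𝔞 ≤ 𝔫`),
namely the annihilator `(0 : 𝔪)` of the maximal ideal `𝔪 = 𝔫(Q ⧸ 𝔞)` of `Q ⧸ 𝔞`. -/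
noncomputable def quotSocle {Q : Type*} [CommRing Q] (𝔫 𝔞 : Ideal Q) :
    Ideal (Q ⧸ 𝔞) :=
  Submodule.annihilator (𝔫.map (Ideal.Quotient.mk 𝔞))

/-!
Write `𝔤 = (g₀) + 𝔟` and `𝔞 = 𝔫 g₀ + 𝔟`. From `𝔫 𝔤 ⊆ 𝔞 ⊆ 𝔤` the ideal `𝔞` has the same radical
as `𝔤`. The socle of `Q ⧸ 𝔞` is the image of the colon ideal `(𝔞 : 𝔫)`, and
`(𝔞 : 𝔫) ⊆ (𝔤 : 𝔫) = (s) + 𝔤 ⊆ (g₀, s) + 𝔞`, while `g₀` and the `sᵢ` lie in `(𝔞 : 𝔫)`.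
If `c₀ g₀ + ∑ cᵢ sᵢ ∈ 𝔞 ⊆ 𝔤`, independence of the `sᵢ` modulo `𝔤` gives `cᵢ ∈ 𝔫`, hence
`∑ cᵢ sᵢ ∈ 𝔞` and `c₀ g₀ ∈ 𝔞`, and then minimality of `g` gives `c₀ ∈ 𝔫`.
-/

open Ideal

section

variable {R : Type*} [CommRing R]

theorem mem_colon_iff_mul_span_singleton_le {I J : Ideal R} {x : R} :
    x ∈ I.colon J ↔ J * span {x} ≤ I := by
  rw [mul_comm, span_singleton_mul_le_iff, Submodule.mem_colon]
  rfl

theorem comap_mk_quotSocle (𝔫 𝔞 : Ideal R) :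
    (quotSocle 𝔫 𝔞).comap (Ideal.Quotient.mk 𝔞) = 𝔞.colon 𝔫 := by
  ext x
  simp only [mem_comap, quotSocle, Ideal.map, Submodule.mem_annihilator_span, Submodule.mem_colon,
    Subtype.forall, Set.forall_mem_image, smul_eq_mul, ← map_mul, Quotient.eq_zero_iff_mem, mul_comm]

theorem quotSocle_eq_span_image_iff (𝔫 𝔞 : Ideal R) (T : Set R) :
    quotSocle 𝔫 𝔞 = span (Ideal.Quotient.mk 𝔞 '' T) ↔ 𝔞.colon 𝔫 = span T ⊔ 𝔞 := by
  rw [← (comap_injective_of_surjective _ Ideal.Quotient.mk_surjective).eq_iff, comap_mk_quotSocle,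
    ← map_span, comap_map_of_surjective _ Ideal.Quotient.mk_surjective, ← RingHom.ker_eq_comap_bot,
    mk_ker]

theorem radical_eq_of_mul_le_of_le {𝔫 𝔤 𝔞 : Ideal R} (h𝔫𝔤 : 𝔫 * 𝔤 ≤ 𝔞) (h𝔞𝔤 : 𝔞 ≤ 𝔤)
    (h𝔤 : 𝔤.radical = 𝔫) : 𝔞.radical = 𝔫 := by
  have h𝔫 : 𝔫.radical = 𝔫 := by rw [← h𝔤, radical_idem]
  refine le_antisymm (h𝔤 ▸ radical_mono h𝔞𝔤) ?_
  calc 𝔫 = (𝔫 * 𝔤).radical := by rw [radical_mul, h𝔫, h𝔤, inf_idem]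
    _ ≤ 𝔞.radical := radical_mono h𝔫𝔤

section Trim

variable {𝔫 𝔟 : Ideal R} {x : R}

theorem mul_span_singleton_sup_le : 𝔫 * span {x} ⊔ 𝔟 ≤ span {x} ⊔ 𝔟 :=
  sup_le_sup_right Ideal.mul_le_right _

theorem mul_le_mul_span_singleton_sup : 𝔫 * (span {x} ⊔ 𝔟) ≤ 𝔫 * span {x} ⊔ 𝔟 := by
  rw [Ideal.mul_sup]
  exact sup_le_sup_left Ideal.mul_le_right _

theorem colon_mul_span_singleton_sup {S : Ideal R} (hS : S ≤ (𝔫 * span {x} ⊔ 𝔟).colon 𝔫)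
    (h : (span {x} ⊔ 𝔟).colon 𝔫 = S ⊔ (span {x} ⊔ 𝔟)) :
    (𝔫 * span {x} ⊔ 𝔟).colon 𝔫 = span {x} ⊔ S ⊔ (𝔫 * span {x} ⊔ 𝔟) := by
  refine le_antisymm ?_ (sup_le (sup_le ?_ hS) le_colon)
  · calc (𝔫 * span {x} ⊔ 𝔟).colon 𝔫 ≤ (span {x} ⊔ 𝔟).colon 𝔫 :=
          Submodule.colon_mono mul_span_singleton_sup_le subset_rfl
      _ = S ⊔ (span {x} ⊔ 𝔟) := h
      _ ≤ span {x} ⊔ S ⊔ (𝔫 * span {x} ⊔ 𝔟) :=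
          sup_le (le_sup_right.trans le_sup_left) (sup_le (le_sup_left.trans le_sup_left)
            (le_sup_right.trans le_sup_right))
  · rw [span_le, Set.singleton_subset_iff, SetLike.mem_coe, mem_colon_iff_mul_span_singleton_le]
    exact le_sup_left

end Trim

theorem mem_of_mul_mem_mul_span_singleton_sup {k : ℕ} {𝔫 : Ideal R} {g : Fin (k + 1) → R}
    (hrel : ∀ c : Fin (k + 1) → R, ∑ i, c i * g i = 0 → c 0 ∈ 𝔫) {c₀ : R}
    (h : c₀ * g 0 ∈ 𝔫 * span {g 0} ⊔ span (Set.range (Fin.tail g))) : c₀ ∈ 𝔫 := by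
  obtain ⟨_, hy, z, hz, hyz⟩ := Submodule.mem_sup.mp h
  obtain ⟨m, hm, rfl⟩ := mem_mul_span_singleton.mp hy
  obtain ⟨d, rfl⟩ := (Submodule.mem_span_range_iff_exists_fun R).mp hz
  have hcm : c₀ - m ∈ 𝔫 := by
    refine hrel (Fin.cons (c₀ - m) (-d)) ?_
    simp only [Fin.sum_univ_succ, Fin.cons_zero, Fin.cons_succ, Fin.tail, Pi.neg_apply, neg_mul,
      Finset.sum_neg_distrib, smul_eq_mul] at hyz ⊢
    linear_combination -hyz
  exact sub_add_cancel c₀ m ▸ add_mem hcm hm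

end

theorem trimmed_ideal_socle_basis_general {Q : Type*} [CommRing Q]
    (𝔫 : Ideal Q)
    (𝔤 : Ideal Q) (h𝔤prim : 𝔤.radical = 𝔫)
    (k : ℕ) (g : Fin (k + 1) → Q)
    (hgen : Ideal.span (Set.range g) = 𝔤)
    (hmin : ∀ c : Fin (k + 1) → Q, (∑ i, c i * g i) ∈ 𝔫 * 𝔤 → ∀ i, c i ∈ 𝔫)
    (t : ℕ) (s : Fin t → Q)
    (hs_span : quotSocle 𝔫 𝔤 = Ideal.span (Set.range fun i => Ideal.Quotient.mk 𝔤 (s i)))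
    (hs_indep : ∀ c : Fin t → Q, (∑ i, c i * s i) ∈ 𝔤 → ∀ i, c i ∈ 𝔫)
    (𝔞 : Ideal Q)
    (h𝔞 : 𝔞 = 𝔫 * Ideal.span {g 0} ⊔ Ideal.span (Set.range fun i : Fin k => g i.succ)) :
    𝔞.radical = 𝔫 ∧
      ((∀ i, 𝔫 * Ideal.span {s i} ≤ 𝔞) →
        (quotSocle 𝔫 𝔞 =
            Ideal.span (insert (Ideal.Quotient.mk 𝔞 (g 0))
              (Set.range fun i => Ideal.Quotient.mk 𝔞 (s i))) ∧
          ∀ (c₀ : Q) (c : Fin t → Q),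
            (c₀ * g 0 + ∑ i, c i * s i) ∈ 𝔞 → c₀ ∈ 𝔫 ∧ ∀ i, c i ∈ 𝔫)) := by
  have h𝔤 : 𝔤 = span {g 0} ⊔ span (Set.range (Fin.tail g)) := by
    rw [← hgen, Fin.range_fin_succ, span_insert]
  have h𝔞𝔤 : 𝔞 ≤ 𝔤 := h𝔞 ▸ h𝔤 ▸ mul_span_singleton_sup_le
  refine ⟨radical_eq_of_mul_le_of_le (h𝔞 ▸ h𝔤 ▸ mul_le_mul_span_singleton_sup) h𝔞𝔤 h𝔤prim,
    fun hsub => ⟨?_, fun c₀ c hmem => ?_⟩⟩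
  · have hs_colon : span (Set.range s) ≤ 𝔞.colon 𝔫 := span_le.mpr <|
      Set.range_subset_iff.mpr fun i => mem_colon_iff_mul_span_singleton_le.mpr (hsub i)
    rw [Set.range_comp' (Ideal.Quotient.mk 𝔤), quotSocle_eq_span_image_iff, h𝔤] at hs_span
    rw [Set.range_comp' (Ideal.Quotient.mk 𝔞), ← Set.image_insert_eq, quotSocle_eq_span_image_iff,
      span_insert]
    rw [h𝔞] at hs_colon ⊢
    exact colon_mul_span_singleton_sup hs_colon hs_span
  · have hg₀ : g 0 ∈ 𝔤 := hgen ▸ subset_span (Set.mem_range_self 0)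
    have hc : ∀ i, c i ∈ 𝔫 :=
      hs_indep c <| (Ideal.add_mem_iff_right 𝔤 (mul_mem_left _ _ hg₀)).mp (h𝔞𝔤 hmem)
    have hsum : ∑ i, c i * s i ∈ 𝔞 :=
      sum_mem fun i _ => hsub i (mul_mem_mul (hc i) (mem_span_singleton_self _))
    refine ⟨mem_of_mul_mem_mul_span_singleton_sup (fun e he => hmin e (he ▸ zero_mem _) 0) ?_, hc⟩
    exact h𝔞 ▸ (Ideal.add_mem_iff_left 𝔞 hsum).mp hmem

/-- Let `(Q, 𝔫)` be a regular local ring with residue field `k`, and `𝔤 ⊆ 𝔫²` an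
`𝔫`-primary ideal minimally generated by `g 0, …, g k`.  Let `s 1, …, s t` be elements
of `Q` whose classes form a `k`-basis of the socle of `Q ⧸ 𝔤` (spanning and linearly
independent over `k`).  Set `𝔞 = 𝔫·g 0 + (g 1, …, g k)`.  Then `𝔞` is `𝔫`-primary and,
if `𝔫·s i ⊆ 𝔞` for all `i`, the classes of `g 0, s 1, …, s t` form a `k`-basis of the
socle of `Q ⧸ 𝔞`; in particular the type of `Q ⧸ 𝔞` is the type of `Q ⧸ 𝔤` plus one. -/
theorem trimmed_ideal_socle_basis {Q : Type*} [CommRing Q] [IsLocalRing Q]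
    (hreg : IsRegularLocal Q)
    (𝔫 : Ideal Q) (h𝔫 : 𝔫 = IsLocalRing.maximalIdeal Q)
    (𝔤 : Ideal Q) (h𝔤𝔫 : 𝔤 ≤ 𝔫 ^ 2) (h𝔤prim : 𝔤.radical = 𝔫)
    (k : ℕ) (g : Fin (k + 1) → Q)
    (hgen : Ideal.span (Set.range g) = 𝔤)
    (hmin : ∀ c : Fin (k + 1) → Q, (∑ i, c i * g i) ∈ 𝔫 * 𝔤 → ∀ i, c i ∈ 𝔫)
    (t : ℕ) (s : Fin t → Q)
    (hs_span : quotSocle 𝔫 𝔤 = Ideal.span (Set.range fun i => Ideal.Quotient.mk 𝔤 (s i)))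
    (hs_indep : ∀ c : Fin t → Q, (∑ i, c i * s i) ∈ 𝔤 → ∀ i, c i ∈ 𝔫)
    (𝔞 : Ideal Q)
    (h𝔞 : 𝔞 = 𝔫 * Ideal.span {g 0} ⊔ Ideal.span (Set.range fun i : Fin k => g i.succ)) :
    𝔞.radical = 𝔫 ∧
      ((∀ i, 𝔫 * Ideal.span {s i} ≤ 𝔞) →
        (quotSocle 𝔫 𝔞 =
            Ideal.span (insert (Ideal.Quotient.mk 𝔞 (g 0))
              (Set.range fun i => Ideal.Quotient.mk 𝔞 (s i))) ∧
          ∀ (c₀ : Q) (c : Fin t → Q),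
            (c₀ * g 0 + ∑ i, c i * s i) ∈ 𝔞 → c₀ ∈ 𝔫 ∧ ∀ i, c i ∈ 𝔫)) :=
  trimmed_ideal_socle_basis_general 𝔫 𝔤 h𝔤prim k g hgen hmin t s hs_span hs_indep 𝔞 h𝔞
end

section
/- Let (Q, 𝔫) be a regular local ring with residue field k, let 𝔤 ⊆ 𝔫² be an 𝔫-primary ideal minimally generated by g_0, …, g_k, and set 𝔞 = 𝔫·g_0 + (g_1, …, g_k). Then the type of Q/𝔞 is at most the type of Q/𝔤 plus 1, i.e., dim_k Soc(Q/𝔞) ≤ dim_k Soc(Q/𝔤) + 1. -/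
/-!
Under the surjection `Q ⧸ 𝔞 → Q ⧸ 𝔤` the socle of `Q ⧸ 𝔞` lands in the socle of `Q ⧸ 𝔤`, and
the kernel `𝔤 ⧸ 𝔞` is spanned by the class of `g 0`, which lies in the socle of `Q ⧸ 𝔞` because
`𝔫 g 0 ⊆ 𝔞`. Socles are vector spaces over the residue field, so the image of the socle of
`Q ⧸ 𝔞` needs at most `t` generators; their lifts together with `g 0` span the socle of `Q ⧸ 𝔞`.
-/

open Submodule IsLocalRing

section Module

variable {R M N : Type*} [CommRing R] [AddCommGroup M] [Module R M] [AddCommGroup N] [Module R N]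

lemma Submodule.map_torsionBySet_le (f : M →ₗ[R] N) (s : Set R) :
    (torsionBySet R M s).map f ≤ torsionBySet R N s := by
  rintro _ ⟨y, hy, rfl⟩
  rw [SetLike.mem_coe, mem_torsionBySet_iff] at hy
  exact (mem_torsionBySet_iff _ _).mpr fun a => by rw [← map_smul, hy a, map_zero]

lemma Submodule.exists_fin_succ_span_eq_of_map_eq_span (f : M →ₗ[R] N) {W : Submodule R M}
    {x : M} (hx : x ∈ W) (hker : W ⊓ LinearMap.ker f ≤ R ∙ x) {t : ℕ} {w : Fin t → N}
    (hw : W.map f = span R (Set.range w)) :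
    ∃ v : Fin (t + 1) → M, W = span R (Set.range v) := by
  have hlift : ∀ i, ∃ u ∈ W, f u = w i := fun i => by
    simpa [← hw] using (subset_span ⟨i, rfl⟩ : w i ∈ span R (Set.range w))
  choose u huW hu using hlift
  set U := span R (Set.range u)
  have hUW : U ≤ W := span_le.mpr (Set.range_subset_iff.mpr huW)
  have hUw : U.map f = W.map f := by
    rw [hw, map_span, ← Set.range_comp]
    exact congrArg _ (congrArg _ (funext hu))
  refine ⟨Fin.cons x u, le_antisymm ?_ ?_⟩
  · calc W ≤ W ⊓ (U ⊔ LinearMap.ker f) := by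
          rw [← comap_map_eq, hUw]
          exact le_inf le_rfl (le_comap_map f W)
      _ = W ⊓ LinearMap.ker f ⊔ U := by rw [sup_comm, inf_sup_assoc_of_le _ hUW]
      _ ≤ (R ∙ x) ⊔ U := sup_le_sup_right hker U
      _ = span R (Set.range (Fin.cons x u)) := by rw [Fin.range_cons, span_insert]
  · rw [span_le, Fin.range_cons, Set.insert_subset_iff]
    exact ⟨hx, Set.range_subset_iff.mpr huW⟩

variable [IsLocalRing R]

lemma Submodule.exists_inf_span_singleton_eq_span_singleton {x : M}
    (hx : x ∈ torsionBySet R M (maximalIdeal R)) (W : Submodule R M) :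
    ∃ z, W ⊓ (R ∙ x) = R ∙ z := by
  rcases eq_or_ne (W ⊓ (R ∙ x)) ⊥ with h | h
  · exact ⟨0, by rw [h, span_zero_singleton]⟩
  obtain ⟨y, ⟨hyW, hyx⟩, hy0⟩ := exists_mem_ne_zero_of_ne_bot h
  obtain ⟨c, rfl⟩ := mem_span_singleton.mp hyx
  have hc : IsUnit c := by
    by_contra hc
    exact hy0 ((mem_torsionBySet_iff _ _).mp hx ⟨c, (mem_maximalIdeal c).mpr hc⟩)
  refine ⟨x, inf_eq_right.mpr ?_⟩
  rw [← span_singleton_smul_eq hc, span_singleton_le_iff_mem]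
  exact hyW

theorem Submodule.exists_fin_span_eq_of_le_span_torsionBySet :
    ∀ {t : ℕ} {M : Type*} [AddCommGroup M] [Module R M] (s : Fin t → M),
      (∀ i, s i ∈ torsionBySet R M (maximalIdeal R)) →
      ∀ W : Submodule R M, W ≤ span R (Set.range s) →
      ∃ w : Fin t → M, W = span R (Set.range w)
  | 0, _, _, _, s, _, W, hW => ⟨s, le_antisymm hW (by simp)⟩
  | t + 1, M, _, _, s, hs, W, hW => by
    set q := (R ∙ s 0).mkQ
    have hsplit : span R (Set.range s) = (R ∙ s 0) ⊔ span R (Set.range (Fin.tail s)) := by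
      conv_lhs => rw [← Fin.cons_self_tail s]
      rw [Fin.range_cons, span_insert]
    have hWq : W.map q ≤ span R (Set.range (q ∘ Fin.tail s)) := by
      refine (map_mono hW).trans ?_
      rw [hsplit, map_sup, mkQ_map_self, bot_sup_eq, map_span, Set.range_comp]
    obtain ⟨w, hw⟩ := exists_fin_span_eq_of_le_span_torsionBySet (q ∘ Fin.tail s)
      (fun i => map_torsionBySet_le q _ ⟨_, hs i.succ, rfl⟩) _ hWq
    obtain ⟨z, hz⟩ := exists_inf_span_singleton_eq_span_singleton (hs 0) W
    refine exists_fin_succ_span_eq_of_map_eq_span q (hz ▸ mem_span_singleton_self z).1 ?_ hw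
    rw [ker_mkQ, hz]

end Module

section Quotient

variable {Q : Type*} [CommRing Q]

lemma restrictScalars_quotSocle (𝔫 𝔟 : Ideal Q) :
    (quotSocle 𝔫 𝔟).restrictScalars Q = torsionBySet Q (Q ⧸ 𝔟) 𝔫 := by
  ext y
  obtain ⟨y, rfl⟩ := Ideal.Quotient.mk_surjective y
  simp only [quotSocle, restrictScalars_mem, mem_annihilator, Ideal.mem_map_iff_of_surjective _
    Ideal.Quotient.mk_surjective, mem_torsionBySet_iff, forall_exists_index, and_imp,
    forall_apply_eq_imp_iff₂, Subtype.forall, Algebra.smul_def, Ideal.Quotient.algebraMap_eq,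
    Algebra.algebraMap_self, RingHom.id_apply, SetLike.mem_coe, mul_comm]

lemma quotSocle_eq_span_iff (𝔫 𝔟 : Ideal Q) (S : Set (Q ⧸ 𝔟)) :
    quotSocle 𝔫 𝔟 = Ideal.span S ↔ torsionBySet Q (Q ⧸ 𝔟) 𝔫 = span Q S := by
  rw [← restrictScalars_inj Q, restrictScalars_quotSocle, Ideal.span,
    restrictScalars_span Q _ Ideal.Quotient.mk_surjective]

variable [IsLocalRing Q]

theorem exists_torsionBySet_eq_span_of_trim (x : Q) (𝔟 : Ideal Q) {t : ℕ}
    (s : Fin t → Q ⧸ (Ideal.span {x} ⊔ 𝔟))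
    (hs : torsionBySet Q _ (maximalIdeal Q) = span Q (Set.range s)) :
    ∃ v : Fin (t + 1) → Q ⧸ (maximalIdeal Q * Ideal.span {x} ⊔ 𝔟),
      torsionBySet Q _ (maximalIdeal Q) = span Q (Set.range v) := by
  have hle : maximalIdeal Q * Ideal.span {x} ⊔ 𝔟 ≤ Ideal.span {x} ⊔ 𝔟 :=
    sup_le_sup_right Ideal.mul_le_right 𝔟
  set f := factor hle
  have hx : Ideal.Quotient.mk _ x ∈ torsionBySet Q (Q ⧸ (maximalIdeal Q * Ideal.span {x} ⊔ 𝔟))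
      (maximalIdeal Q) := by
    refine (mem_torsionBySet_iff _ _).mpr fun ⟨a, ha⟩ => ?_
    rw [Algebra.smul_def, Ideal.Quotient.algebraMap_eq, ← map_mul, Ideal.Quotient.eq_zero_iff_mem]
    exact Ideal.mem_sup_left (Ideal.mul_mem_mul ha (Ideal.mem_span_singleton_self x))
  have hker : LinearMap.ker f ≤ Q ∙ Ideal.Quotient.mk _ x := by
    intro y hy
    obtain ⟨z, rfl⟩ := Ideal.Quotient.mk_surjective y
    have hz : z ∈ Ideal.span {x} ⊔ 𝔟 := Ideal.Quotient.eq_zero_iff_mem.mp hy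
    obtain ⟨_, hax, b, hb, rfl⟩ := mem_sup.mp hz
    obtain ⟨a, rfl⟩ := Ideal.mem_span_singleton'.mp hax
    refine mem_span_singleton.mpr ⟨a, ?_⟩
    rw [Algebra.smul_def, Ideal.Quotient.algebraMap_eq, ← map_mul,
      Ideal.Quotient.mk_eq_mk_iff_sub_mem]
    simpa using Ideal.mem_sup_right (neg_mem hb)
  obtain ⟨w, hw⟩ := exists_fin_span_eq_of_le_span_torsionBySet s
    (fun i => hs ▸ subset_span ⟨i, rfl⟩) _ (hs ▸ map_torsionBySet_le f _)
  exact exists_fin_succ_span_eq_of_map_eq_span f hx (inf_le_right.trans hker) hw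

end Quotient

theorem trimmed_ideal_type_le_general {Q : Type*} [CommRing Q] [IsLocalRing Q]
    (𝔫 : Ideal Q) (h𝔫 : 𝔫 = IsLocalRing.maximalIdeal Q)
    (𝔤 : Ideal Q)
    (k : ℕ) (g : Fin (k + 1) → Q)
    (hgen : Ideal.span (Set.range g) = 𝔤)
    (𝔞 : Ideal Q)
    (h𝔞 : 𝔞 = 𝔫 * Ideal.span {g 0} ⊔ Ideal.span (Set.range fun i : Fin k => g i.succ)) :
    ∀ (t : ℕ) (s : Fin t → Q),
      quotSocle 𝔫 𝔤 = Ideal.span (Set.range fun i => Ideal.Quotient.mk 𝔤 (s i)) →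
      ∃ v : Fin (t + 1) → Q,
        quotSocle 𝔫 𝔞 = Ideal.span (Set.range fun i => Ideal.Quotient.mk 𝔞 (v i)) := by
  intro t s hsoc
  subst h𝔫 hgen h𝔞
  have hsplit : Ideal.span (Set.range g) =
      Ideal.span {g 0} ⊔ Ideal.span (Set.range fun i : Fin k => g i.succ) := by
    conv_lhs => rw [← Fin.cons_self_tail g]
    rw [Fin.range_cons, Ideal.span_insert]
    rfl
  rw [hsplit, quotSocle_eq_span_iff] at hsoc
  obtain ⟨v, hv⟩ := exists_torsionBySet_eq_span_of_trim (g 0) _ _ hsoc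
  choose u hu using fun i => Ideal.Quotient.mk_surjective (v i)
  refine ⟨u, (quotSocle_eq_span_iff _ _ _).mpr ?_⟩
  simpa only [hu] using hv

/-- Let `(Q, 𝔫)` be a regular local ring with residue field `k`, let `𝔤 ⊆ 𝔫²` be an
`𝔫`-primary ideal minimally generated by `g 0, …, g k`, and set
`𝔞 = 𝔫·g 0 + (g 1, …, g k)`.  Then `dim_k Soc(Q ⧸ 𝔞) ≤ dim_k Soc(Q ⧸ 𝔤) + 1`,
i.e. whenever the socle of `Q ⧸ 𝔤` is spanned (over the residue field `k`) by `t`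
elements, the socle of `Q ⧸ 𝔞` is spanned by `t + 1` elements. -/
theorem trimmed_ideal_type_le {Q : Type*} [CommRing Q] [IsLocalRing Q]
    (hreg : IsRegularLocal Q)
    (𝔫 : Ideal Q) (h𝔫 : 𝔫 = IsLocalRing.maximalIdeal Q)
    (𝔤 : Ideal Q) (h𝔤𝔫 : 𝔤 ≤ 𝔫 ^ 2) (h𝔤prim : 𝔤.radical = 𝔫)
    (k : ℕ) (g : Fin (k + 1) → Q)
    (hgen : Ideal.span (Set.range g) = 𝔤)
    (hmin : ∀ c : Fin (k + 1) → Q, (∑ i, c i * g i) ∈ 𝔫 * 𝔤 → ∀ i, c i ∈ 𝔫)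
    (𝔞 : Ideal Q)
    (h𝔞 : 𝔞 = 𝔫 * Ideal.span {g 0} ⊔ Ideal.span (Set.range fun i : Fin k => g i.succ)) :
    ∀ (t : ℕ) (s : Fin t → Q),
      quotSocle 𝔫 𝔤 = Ideal.span (Set.range fun i => Ideal.Quotient.mk 𝔤 (s i)) →
      ∃ v : Fin (t + 1) → Q,
        quotSocle 𝔫 𝔞 = Ideal.span (Set.range fun i => Ideal.Quotient.mk 𝔞 (v i)) :=
  trimmed_ideal_type_le_general 𝔫 h𝔫 𝔤 k g hgen 𝔞 h𝔞
end

section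
/- Let Q = k[[x,y,z]] be the power series ring in three variables over a field k and let m ≥ 2. Then the elements x^m, y^m, d_m form a Q-regular sequence, where d_m = det(U_m). -/
/-!
Reversing the columns of `U_m` gives a tridiagonal matrix which is lower triangular modulo `x`,
so `d_m = ±(z^m + x c)`. The ideal `(x^t, y^b)` consists of the power series whose exponents lie
in an upper set of `ℕ³` that ignores the `z`-coordinate; hence `z^p` is a nonzerodivisor modulo
it, and `x` maps it into `(x^(t+1), y^b)`. So if `(z^m + x c) f ∈ (x^m, y^m)`, then
`z^m f ∈ (x^(t+1), y^m)` whenever `f ∈ (x^t, y^m)`, and induction on `t ≤ m` gives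
`f ∈ (x^m, y^m)`. The same monomial argument shows that `y^m` is a nonzerodivisor modulo `x^m`,
and the sequence lies in the maximal ideal of the local ring `k[[x,y,z]]`.
-/

section Determinant

variable {R : Type*} [CommRing R]

theorem Umat_submatrix_revPerm_apply (x y z : R) {m : ℕ} (i j : Fin m) :
    (Umat x y z m).submatrix id Fin.revPerm i j =
      if (i : ℕ) + 1 = j then x else if (i : ℕ) = j then z else if (i : ℕ) = j + 1 then y
      else 0 := by
  have hrev : ((Fin.revPerm j : Fin m) : ℕ) = m - (j + 1) := by simp [Fin.val_rev]
  have := j.isLt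
  simp only [Umat, Matrix.submatrix_apply, Matrix.of_apply, id_eq, hrev]
  split_ifs <;> first | rfl | omega

theorem exists_dSeq_eq_units_mul (x y z : R) (m : ℕ) :
    ∃ (u : Rˣ) (c : R), dSeq x y z m = u * (z ^ m + x * c) := by
  set T := (Umat x y z m).submatrix id Fin.revPerm
  have hT : (T.map (Ideal.Quotient.mk (Ideal.span {x}))).IsLowerTriangular := by
    intro i j hij
    simp only [T, Matrix.map_apply, Umat_submatrix_revPerm_apply]
    have : (i : ℕ) < j := hij
    split_ifs <;> first | omega | simp
  have hdet : T.det - z ^ m ∈ Ideal.span {x} := by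
    rw [← Ideal.Quotient.eq, RingHom.map_det, RingHom.mapMatrix_apply,
      Matrix.det_of_isLowerTriangular _ hT]
    simp only [T, Matrix.map_apply, Umat_submatrix_revPerm_apply]
    simp
  obtain ⟨c, hc⟩ := Ideal.mem_span_singleton'.1 hdet
  refine ⟨Units.map (Int.castRingHom R : ℤ →* R) (Equiv.Perm.sign (Fin.revPerm (n := m))), c, ?_⟩
  have hU : Umat x y z m = T.submatrix id Fin.revPerm := by ext; simp [T]
  rw [dSeq, hU, Matrix.det_permute', ← sub_add_cancel T.det (z ^ m), ← hc]
  simp [mul_comm, add_comm]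

end Determinant

theorem Finsupp.isUpperSet_setOf_le_apply {σ α : Type*} [Zero α] [Preorder α] (i : σ) (a : α) :
    IsUpperSet {e : σ →₀ α | a ≤ e i} :=
  fun _ _ h h' => le_trans h' (h i)

namespace MvPowerSeries

variable {σ R : Type*} [CommRing R]

def idealOfUpperSet (S : Set (σ →₀ ℕ)) (hS : IsUpperSet S) : Ideal (MvPowerSeries σ R) where
  carrier := {f | ∀ e ∉ S, coeff e f = 0}
  add_mem' hf hg e he := by simp [hf e he, hg e he]
  zero_mem' := by simp
  smul_mem' g f hf e he := by
    classical
    rw [smul_eq_mul, coeff_mul]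
    refine Finset.sum_eq_zero fun p hp => ?_
    rw [hf p.2 fun h => he (hS (Finset.HasAntidiagonal.antidiagonal.snd_le hp) h), mul_zero]

variable {S T : Set (σ →₀ ℕ)}

theorem mem_idealOfUpperSet {hS : IsUpperSet S} {f : MvPowerSeries σ R} :
    f ∈ idealOfUpperSet S hS ↔ ∀ e ∉ S, coeff e f = 0 :=
  Iff.rfl

theorem idealOfUpperSet_mono {hS : IsUpperSet S} {hT : IsUpperSet T} (h : S ⊆ T) :
    idealOfUpperSet S hS ≤ idealOfUpperSet (R := R) T hT :=
  fun _ hf e he => hf e fun h' => he (h h')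

theorem idealOfUpperSet_union (hS : IsUpperSet S) (hT : IsUpperSet T) :
    idealOfUpperSet (S ∪ T) (hS.union hT) =
      idealOfUpperSet (R := R) S hS ⊔ idealOfUpperSet T hT := by
  refine le_antisymm (fun f hf => ?_)
    (sup_le (idealOfUpperSet_mono Set.subset_union_left)
      (idealOfUpperSet_mono Set.subset_union_right))
  classical
  let g : MvPowerSeries σ R := S.indicator fun e => coeff e f
  have hcoeff (e : σ →₀ ℕ) : coeff e g = S.indicator (fun e => coeff e f) e := rfl
  have hg : g ∈ idealOfUpperSet S hS := fun e he => by rw [hcoeff, Set.indicator_of_notMem he]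
  have hfg : f - g ∈ idealOfUpperSet T hT := fun e he => by
    by_cases heS : e ∈ S
    · rw [map_sub, hcoeff, Set.indicator_of_mem heS, sub_self]
    · rw [map_sub, hcoeff, Set.indicator_of_notMem heS, sub_zero, hf e (by simp [heS, he])]
  simpa using add_mem (Ideal.mem_sup_left hg) (Ideal.mem_sup_right hfg)

theorem idealOfUpperSet_le_apply (i : σ) (a : ℕ) :
    idealOfUpperSet {e | a ≤ e i} (Finsupp.isUpperSet_setOf_le_apply i a) =
      Ideal.span {(X i : MvPowerSeries σ R) ^ a} := by
  ext f
  rw [mem_idealOfUpperSet, Ideal.mem_span_singleton, X_pow_dvd_iff]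
  simp

theorem monomial_one_mul_mem_idealOfUpperSet {hS : IsUpperSet S} {hT : IsUpperSet T}
    (a : σ →₀ ℕ) (h : ∀ e ∈ S, a + e ∈ T) {f : MvPowerSeries σ R}
    (hf : f ∈ idealOfUpperSet S hS) : monomial a 1 * f ∈ idealOfUpperSet T hT := by
  intro e he
  rw [coeff_monomial_mul]
  split_ifs with hae
  · rw [hf (e - a) fun h' => he (by simpa [hae] using h _ h'), mul_zero]
  · rfl

theorem mem_of_monomial_one_mul_mem_idealOfUpperSet {hS : IsUpperSet S} {hT : IsUpperSet T}
    (a : σ →₀ ℕ) (h : ∀ e, a + e ∈ T → e ∈ S) {f : MvPowerSeries σ R}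
    (hf : monomial a 1 * f ∈ idealOfUpperSet T hT) : f ∈ idealOfUpperSet S hS := fun e he => by
  simpa [coeff_add_monomial_mul] using hf (a + e) fun h' => he (h e h')

theorem mem_span_X_pow_of_X_pow_mul_mem {i j : σ} (hij : i ≠ j) {a b : ℕ}
    {f : MvPowerSeries σ R} (h : X j ^ b * f ∈ Ideal.span {X i ^ a}) :
    f ∈ Ideal.span {X i ^ a} := by
  rw [← idealOfUpperSet_le_apply, X_pow_eq] at *
  refine mem_of_monomial_one_mul_mem_idealOfUpperSet _ (fun e he => ?_) h
  simpa [Finsupp.single_apply, hij.symm] using he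

theorem mem_span_X_pow_pair_of_mul_mem {i j s : σ} (hsi : s ≠ i) (hsj : s ≠ j) {a b p : ℕ}
    {c f : MvPowerSeries σ R} (h : (X s ^ p + X i * c) * f ∈ Ideal.span {X i ^ a, X j ^ b}) :
    f ∈ Ideal.span {X i ^ a, X j ^ b} := by
  let K (t : ℕ) : Ideal (MvPowerSeries σ R) :=
    idealOfUpperSet ({e | t ≤ e i} ∪ {e | b ≤ e j})
      ((Finsupp.isUpperSet_setOf_le_apply i t).union (Finsupp.isUpperSet_setOf_le_apply j b))
  have hK (t : ℕ) : K t = Ideal.span {X i ^ t, X j ^ b} := by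
    simp only [K]
    rw [idealOfUpperSet_union (Finsupp.isUpperSet_setOf_le_apply i t)
      (Finsupp.isUpperSet_setOf_le_apply j b), idealOfUpperSet_le_apply, idealOfUpperSet_le_apply,
      ← Ideal.span_union, Set.singleton_union]
  have hK_anti : Antitone K := fun t t' htt' =>
    idealOfUpperSet_mono (Set.union_subset_union_left _ fun e he => le_trans htt' he)
  suffices ∀ t ≤ a, f ∈ K t from hK a ▸ this a le_rfl
  intro t
  induction t with
  | zero => exact fun _ e he => absurd (Or.inl (Nat.zero_le _)) he
  | succ t ih =>
    intro ht
    have hXi : X i * (c * f) ∈ K (t + 1) := by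
      rw [← pow_one (X i), X_pow_eq]
      refine monomial_one_mul_mem_idealOfUpperSet _ (fun e he => ?_)
        (Ideal.mul_mem_left _ c (ih (by omega)))
      simp only [Set.mem_union, Set.mem_ofPred_eq, Finsupp.add_apply,
        Finsupp.single_eq_same] at he ⊢
      omega
    have hXs : X s ^ p * f ∈ K (t + 1) := by
      have := sub_mem (hK_anti ht ((hK a).symm ▸ h)) hXi
      rwa [add_mul, mul_assoc, add_sub_cancel_right] at this
    rw [X_pow_eq] at hXs
    refine mem_of_monomial_one_mul_mem_idealOfUpperSet _ (fun e he => ?_) hXs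
    simpa [Finsupp.single_apply, hsi, hsj] using he

theorem X_ne_zero [Nontrivial R] (i : σ) : (X i : MvPowerSeries σ R) ≠ 0 := fun h => by
  simpa [coeff_X] using congrArg (coeff (Finsupp.single i 1)) h

theorem X_mem_maximalIdeal {k : Type*} [Field k] (i : σ) :
    X i ∈ IsLocalRing.maximalIdeal (MvPowerSeries σ k) := by
  simp [IsLocalRing.mem_maximalIdeal, mem_nonunits_iff, isUnit_iff_constantCoeff]

end MvPowerSeries

theorem RingTheory.Sequence.isWeaklyRegular_self_iff {R : Type*} [CommRing R] (rs : List R) :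
    IsWeaklyRegular R rs ↔ ∀ i (h : i < rs.length) (f : R),
      rs[i] * f ∈ Ideal.ofList (rs.take i) → f ∈ Ideal.ofList (rs.take i) := by
  simp only [isWeaklyRegular_iff, Ideal.mul_top, isSMulRegular_quotient_iff_mem_of_smul_mem,
    smul_eq_mul]

open MvPowerSeries RingTheory.Sequence

/-- In `Q = k[[x,y,z]]` with `m ≥ 2`, the elements `x^m, y^m, d_m` form a
`Q`-regular sequence. -/
theorem pow_pow_dSeq_isRegular {k : Type*} [Field k] (m : ℕ) (hm : 2 ≤ m)
    (x y z : MvPowerSeries (Fin 3) k)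
    (hx : x = MvPowerSeries.X 0) (hy : y = MvPowerSeries.X 1)
    (hz : z = MvPowerSeries.X 2) :
    RingTheory.Sequence.IsRegular (MvPowerSeries (Fin 3) k)
      [x ^ m, y ^ m, dSeq x y z m] := by
  subst hx hy hz
  obtain ⟨u, c, hd⟩ := exists_dSeq_eq_units_mul (X 0) (X 1) (X 2 : MvPowerSeries (Fin 3) k) m
  refine .of_isWeaklyRegular_of_mem_maximalIdeal _ ?_ ?_
  · have hpow (i : Fin 3) := Ideal.pow_mem_of_mem _ (X_mem_maximalIdeal (k := k) i) m (by omega)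
    simp only [List.forall_mem_cons, List.not_mem_nil, IsEmpty.forall_iff, implies_true, and_true]
    exact ⟨hpow 0, hpow 1, hd ▸ Ideal.mul_mem_left _ _
      (add_mem (hpow 2) (Ideal.mul_mem_right _ _ (X_mem_maximalIdeal 0)))⟩
  rw [isWeaklyRegular_self_iff]
  rintro (_ | _ | _ | i) hi f hf <;>
    simp only [List.take_succ_cons, List.take_zero, Ideal.ofList_cons, Ideal.ofList_nil,
      bot_le, sup_of_le_left, List.getElem_cons_succ, List.getElem_cons_zero,
      ← Ideal.span_insert] at hf ⊢
  · simpa [X_ne_zero] using hf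
  · exact mem_span_X_pow_of_X_pow_mul_mem (by decide) hf
  · rw [hd, mul_assoc, Ideal.unit_mul_mem_iff_mem _ u.isUnit] at hf
    exact mem_span_X_pow_pair_of_mul_mem (by decide) (by decide) hf
  · exact absurd hi (by simp)
end

section
/- Let Q = k[[x,y,z]] be the power series ring in three variables over a field k with maximal ideal 𝔫 = (x,y,z), and for m ≥ 2 let 𝔤_m be the ideal of Q generated by the 2m+1 elements x^{m−i} d_i and y^{m−i} d_i for 0 ≤ i ≤ m−1 together with d_m. Then 𝔤_m ⊆ 𝔫², 𝔤_m is 𝔫-primary, and these 2m+1 elements minimally generate 𝔤_m, i.e., μ(𝔤_m) = 2m+1 and their images form a k-basis of 𝔤_m/𝔫𝔤_m. -/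
/-- `d_i` in `Q = k[[x,y,z]]`, with `x = X 0`, `y = X 1`, `z = X 2`. -/
noncomputable def dPS (k : Type*) [Field k] (i : ℕ) : MvPowerSeries (Fin 3) k :=
  dSeq (MvPowerSeries.X 0) (MvPowerSeries.X 1) (MvPowerSeries.X 2) i

/-- The maximal ideal `𝔫 = (x, y, z)` of `Q = k[[x,y,z]]`. -/
noncomputable def nIdeal (k : Type*) [Field k] : Ideal (MvPowerSeries (Fin 3) k) :=
  Ideal.span {MvPowerSeries.X 0, MvPowerSeries.X 1, MvPowerSeries.X 2}

/-- The `2m + 1` generators of the Gorenstein ideal `𝔤_m ⊆ k[[x,y,z]]`: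
`x^{m-i} d_i` for `0 ≤ i ≤ m - 1` (indices `0, …, m-1`), `y^{m-i} d_i` for
`0 ≤ i ≤ m - 1` (indices `m, …, 2m-1`), and `d_m` (index `2m`). -/
noncomputable def gGens (k : Type*) [Field k] (m : ℕ) :
    Fin (2 * m + 1) → MvPowerSeries (Fin 3) k := fun i =>
  if (i : ℕ) < m then MvPowerSeries.X 0 ^ (m - (i : ℕ)) * dPS k (i : ℕ)
  else if (i : ℕ) < 2 * m then
    MvPowerSeries.X 1 ^ (m - ((i : ℕ) - m)) * dPS k ((i : ℕ) - m)
  else dPS k m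

/-- The Gorenstein ideal `𝔤_m` of `k[[x,y,z]]` generated by the sub-maximal Pfaffians
`x^{m-i} d_i`, `y^{m-i} d_i` (`0 ≤ i ≤ m - 1`) and `d_m`. -/
noncomputable def gIdeal (k : Type*) [Field k] (m : ℕ) :
    Ideal (MvPowerSeries (Fin 3) k) :=
  Ideal.span (Set.range (gGens k m))

/-!
Each generator is `x^p d_i` or `y^p d_i` with `p + i = m`, and `d_i` is the determinant of an
`i × i` matrix with entries in `𝔫`, so all generators lie in `𝔫^m` and `𝔫 𝔤_m ⊆ 𝔫^(m+1)`.
A relation modulo `𝔫 𝔤_m` can therefore be read off on the coefficients of total degree `m`,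
where only the constant terms of the coefficients survive. Give `x, y, z` the weights
`1, -1, 0`: the entry `(i, j)` of `U_m` then has weight `(m - 1 - i) - j`, these sum to `0`
along every permutation, so `d_i` is homogeneous of weight `0` and the `2m + 1` generators
have the pairwise distinct weights `m - i`, `i - m` and `0`. Since `d_i(0, 0, z) = ±z^i`, each
generator has coefficient `±1` at `x^(m-i) z^i`, `y^(m-i) z^i`, resp. `z^m`, which forces the
constant terms of the coefficients to vanish. Comparing two generating families through their
transition matrices modulo `𝔫` then bounds the number of generators from below.

The same specialisation `d_m ≡ ±z^m mod (x, y)`, together with `x^m, y^m ∈ 𝔤_m`, shows that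
`𝔤_m` is `𝔫`-primary.
-/

open Finsupp MvPolynomial

namespace MvPowerSeries

variable {σ R : Type*}

theorem mem_span_range_X_of_constantCoeff_eq_zero [CommSemiring R] [Finite σ]
    {f : MvPowerSeries σ R} (hf : constantCoeff f = 0) : f ∈ Ideal.span (Set.range X) := by
  classical
  cases nonempty_fintype σ
  choose v hv using fun (μ : σ →₀ ℕ) (h : μ ≠ 0) => Finsupp.ne_iff.mp h
  -- every nonconstant monomial `μ` is charged to one variable `v μ` occurring in it
  let g : σ → MvPowerSeries σ R := fun s μ =>
    if v (μ + single s 1) (by simp) = s then coeff (μ + single s 1) f else 0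
  have coeff_g : ∀ s μ (h : single s 1 ≤ μ), coeff (μ - single s 1) (g s) =
      if v μ (by rintro rfl; simp at h) = s then coeff μ f else 0 := by
    intro s μ h
    show (if _ then _ else _) = _
    simp only [tsub_add_cancel_of_le h]
  have hfg : f = ∑ s, X s * g s := by
    ext μ
    simp only [map_sum, X, coeff_monomial_mul, one_mul]
    by_cases hμ : μ = 0
    · subst hμ
      simp [hf]
    · rw [Finset.sum_eq_single (v μ hμ)]
      · have hle : single (v μ hμ) 1 ≤ μ := by
          simpa [Nat.one_le_iff_ne_zero] using hv μ hμ
        rw [if_pos hle, coeff_g _ _ hle, if_pos rfl]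
      · intro s _ hs
        split_ifs with hle
        · rw [coeff_g _ _ hle, if_neg (Ne.symm hs)]
        · rfl
      · simp
  rw [hfg]
  exact Ideal.sum_mem _ fun s _ => Ideal.mul_mem_right _ _ (Ideal.subset_span ⟨s, rfl⟩)

variable [CommRing R]

theorem ker_constantCoeff_eq_span_range_X [Finite σ] :
    RingHom.ker (constantCoeff (σ := σ) (R := R)) = Ideal.span (Set.range X) := by
  refine le_antisymm (fun f hf => mem_span_range_X_of_constantCoeff_eq_zero hf) ?_
  rw [Ideal.span_le]
  rintro _ ⟨s, rfl⟩
  simp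

theorem le_order_of_mem_pow_ker {n : ℕ} {f : MvPowerSeries σ R}
    (hf : f ∈ RingHom.ker (constantCoeff (σ := σ) (R := R)) ^ n) : (n : ℕ∞) ≤ f.order := by
  induction n generalizing f with
  | zero => simp
  | succ n ih =>
    rw [pow_succ] at hf
    refine Submodule.mul_induction_on hf (fun a ha b hb => ?_) (fun a b ha hb => ?_)
    · calc ((n + 1 : ℕ) : ℕ∞) = n + 1 := by push_cast; rfl
        _ ≤ a.order + b.order :=
          add_le_add (ih ha) (one_le_order_iff_constCoeff_eq_zero.mpr hb)
        _ ≤ (a * b).order := le_order_mul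
    · exact (le_min ha hb).trans min_order_le_add

theorem coeff_eq_zero_of_mem_pow_ker {n : ℕ} {f : MvPowerSeries σ R}
    (hf : f ∈ RingHom.ker (constantCoeff (σ := σ) (R := R)) ^ n) {d : σ →₀ ℕ}
    (hd : d.degree < n) : coeff d f = 0 :=
  coeff_of_lt_order ((Nat.cast_lt.mpr hd).trans_le (le_order_of_mem_pow_ker hf))

theorem coeff_mul_of_mem_pow_ker {n : ℕ} {g : MvPowerSeries σ R}
    (hg : g ∈ RingHom.ker (constantCoeff (σ := σ) (R := R)) ^ n) (c : MvPowerSeries σ R)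
    {d : σ →₀ ℕ} (hd : d.degree = n) : coeff d (c * g) = constantCoeff c * coeff d g := by
  have hc : c - C (constantCoeff c) ∈ RingHom.ker (constantCoeff (σ := σ) (R := R)) := by
    simp
  have hmem := Ideal.mul_mem_mul hc hg
  rw [← pow_succ'] at hmem
  have h0 : coeff d ((c - C (constantCoeff c)) * g) = 0 :=
    coeff_eq_zero_of_mem_pow_ker hmem (by omega)
  rwa [sub_mul, map_sub, coeff_C_mul, sub_eq_zero] at h0

theorem constantCoeff_eq_zero_of_sum_mul_mem_pow_ker [NoZeroDivisors R]
    {M ι : Type*} [AddCommMonoid M] [Fintype ι] {w : σ → M} {e : ι → M}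
    (he : Function.Injective e) {n : ℕ} {g : ι → MvPowerSeries σ R}
    (hg : ∀ i, g i ∈ RingHom.ker (constantCoeff (σ := σ) (R := R)) ^ n)
    (hw : ∀ i d, coeff d (g i) ≠ 0 → weight w d = e i)
    (hne : ∀ i, ∃ d : σ →₀ ℕ, d.degree = n ∧ coeff d (g i) ≠ 0) {c : ι → MvPowerSeries σ R}
    (hc : ∑ i, c i * g i ∈ RingHom.ker (constantCoeff (σ := σ) (R := R)) ^ (n + 1)) (i : ι) :
    constantCoeff (c i) = 0 := by
  classical
  obtain ⟨d, hd, hdi⟩ := hne i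
  have h0 : coeff d (∑ j, c j * g j) = 0 := coeff_eq_zero_of_mem_pow_ker hc (by omega)
  rw [map_sum, Finset.sum_eq_single i, coeff_mul_of_mem_pow_ker (hg i) _ hd] at h0
  · exact (mul_eq_zero.mp h0).resolve_right hdi
  · intro j _ hji
    rw [coeff_mul_of_mem_pow_ker (hg j) _ hd, not_not.mp fun h =>
      hji (he ((hw j d h).symm.trans (hw i d hdi))), mul_zero]
  · simp

end MvPowerSeries

theorem Matrix.det_mem_pow_card {n R : Type*} [Fintype n] [DecidableEq n] [CommRing R]
    {I : Ideal R} {A : Matrix n n R} (hA : ∀ i j, A i j ∈ I) : A.det ∈ I ^ Fintype.card n := by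
  rw [Matrix.det_apply]
  refine Ideal.sum_mem _ fun σ _ => ?_
  rw [Units.smul_def]
  refine Submodule.smul_of_tower_mem _ _ ?_
  rw [← Finset.card_univ, ← Finset.prod_const]
  exact Ideal.prod_mem_prod fun b _ => hA _ _

open Matrix in
theorem Ideal.card_le_card_of_span_range_eq {R : Type*} [CommRing R] (𝔪 : Ideal R)
    [𝔪.IsMaximal] {ι κ : Type*} [Fintype ι] [Fintype κ] [DecidableEq ι] {g : ι → R}
    (hg : ∀ c : ι → R, ∑ i, c i * g i = 0 → ∀ i, c i ∈ 𝔪) {f : κ → R}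
    (hfg : Ideal.span (Set.range f) = Ideal.span (Set.range g)) :
    Fintype.card ι ≤ Fintype.card κ := by
  choose a ha using fun i => (Submodule.mem_span_range_iff_exists_fun R).mp
    (hfg ▸ Ideal.subset_span ⟨i, rfl⟩ : g i ∈ Ideal.span (Set.range f))
  choose b hb using fun j => (Submodule.mem_span_range_iff_exists_fun R).mp
    (hfg ▸ Ideal.subset_span ⟨j, rfl⟩ : f j ∈ Ideal.span (Set.range g))
  let A : Matrix ι κ R := Matrix.of a
  let B : Matrix κ ι R := Matrix.of b
  have hAf : A *ᵥ f = g := funext fun i => by simpa [Matrix.mulVec, dotProduct, A] using ha i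
  have hBg : B *ᵥ g = f := funext fun j => by simpa [Matrix.mulVec, dotProduct, B] using hb j
  have hker : (A * B - 1) *ᵥ g = 0 := by
    rw [Matrix.sub_mulVec, ← Matrix.mulVec_mulVec, hBg, hAf, Matrix.one_mulVec, sub_self]
  have hmem : ∀ i l, (A * B - 1 : Matrix ι ι R) i l ∈ 𝔪 := fun i =>
    hg (fun l => (A * B - 1 : Matrix ι ι R) i l) (congrFun hker i)
  let π := Ideal.Quotient.mk 𝔪
  have hAB : A.map π * B.map π = 1 := by
    rw [← Matrix.map_mul, ← Matrix.map_one π (map_zero π) (map_one π)]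
    ext i l
    exact Ideal.Quotient.eq.mpr (hmem i l)
  calc Fintype.card ι = (A.map π * B.map π).rank := by rw [hAB, Matrix.rank_one]
    _ ≤ (A.map π).rank := Matrix.rank_mul_le_left _ _
    _ ≤ Fintype.card κ := Matrix.rank_le_card_width _

section dSeq

variable {R S : Type*} [CommRing R] [CommRing S]

theorem Umat_map (f : R →+* S) (x y z : R) (m : ℕ) :
    (Umat x y z m).map f = Umat (f x) (f y) (f z) m := by
  ext i j
  simp only [Umat, Matrix.map_apply, Matrix.of_apply]
  split_ifs <;> simp

theorem map_dSeq (f : R →+* S) (x y z : R) (m : ℕ) :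
    f (dSeq x y z m) = dSeq (f x) (f y) (f z) m := by
  rw [dSeq, dSeq, RingHom.map_det, RingHom.mapMatrix_apply, Umat_map]

theorem Umat_zero_zero (z : R) (m : ℕ) :
    Umat 0 0 z m = z • (Fin.revPerm : Equiv.Perm (Fin m)).permMatrix R := by
  ext i j
  simp only [Umat, Matrix.of_apply, Matrix.smul_apply, Equiv.Perm.permMatrix,
    PEquiv.toMatrix_apply, Equiv.toPEquiv_apply, Option.mem_def, Option.some.injEq,
    Fin.revPerm_apply, Fin.ext_iff, Fin.val_rev]
  split_ifs <;> first | omega | simp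

theorem dSeq_zero_zero (z : R) (m : ℕ) :
    dSeq 0 0 z m = (Equiv.Perm.sign (Fin.revPerm : Equiv.Perm (Fin m)) : R) * z ^ m := by
  rw [dSeq, Umat_zero_zero, Matrix.det_smul, Matrix.det_permutation, Fintype.card_fin, mul_comm]

theorem isUnit_intCast_sign {α : Type*} [Fintype α] [DecidableEq α] (σ : Equiv.Perm α) :
    IsUnit (Equiv.Perm.sign σ : R) :=
  (Equiv.Perm.sign σ).isUnit.map (Int.castRingHom R)

theorem dSeq_mem_pow {I : Ideal R} {x y z : R} (hx : x ∈ I) (hy : y ∈ I) (hz : z ∈ I)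
    (m : ℕ) : dSeq x y z m ∈ I ^ m := by
  simpa [dSeq] using Matrix.det_mem_pow_card (A := Umat x y z m) fun i j => by
    simp only [Umat, Matrix.of_apply]
    split_ifs <;> first | assumption | exact I.zero_mem

theorem mem_radical_of_dSeq_mem {I : Ideal R} {x y z : R} (hx : x ∈ I.radical)
    (hy : y ∈ I.radical) {m : ℕ} (hd : dSeq x y z m ∈ I) : z ∈ I.radical := by
  let π := Ideal.Quotient.mk I.radical
  have hdet := map_dSeq π x y z m
  rw [Ideal.Quotient.eq_zero_iff_mem.mpr hx, Ideal.Quotient.eq_zero_iff_mem.mpr hy,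
    dSeq_zero_zero, Ideal.Quotient.eq_zero_iff_mem.mpr (Ideal.le_radical hd)] at hdet
  have hzm : π (z ^ m) = 0 := by
    rw [map_pow]
    exact ((isUnit_intCast_sign _).mul_right_eq_zero).mp hdet.symm
  rw [← Ideal.radical_idem]
  exact ⟨m, Ideal.Quotient.eq_zero_iff_mem.mp hzm⟩

end dSeq

section WeightedHomogeneous

variable {R : Type*} [CommRing R]

def xyWeight : Fin 3 → ℤ := ![1, -1, 0]

theorem isWeightedHomogeneous_Umat_X {m : ℕ} (i j : Fin m) :
    IsWeightedHomogeneous xyWeight (Umat (X 0) (X 1) (X 2) m i j : MvPolynomial (Fin 3) R)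
      ((i.rev : ℤ) - j) := by
  have hi := Fin.val_rev i
  simp only [Umat, Matrix.of_apply]
  split_ifs with hx hz hy
  · convert isWeightedHomogeneous_X R xyWeight 0 using 1
    simp [xyWeight]; omega
  · convert isWeightedHomogeneous_X R xyWeight 2 using 1
    simp [xyWeight]; omega
  · convert isWeightedHomogeneous_X R xyWeight 1 using 1
    simp [xyWeight]; omega
  · exact isWeightedHomogeneous_zero _ _ _

theorem isWeightedHomogeneous_dSeq_X (m : ℕ) :
    IsWeightedHomogeneous xyWeight (dSeq (X 0) (X 1) (X 2) m : MvPolynomial (Fin 3) R) 0 := by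
  rw [dSeq, Matrix.det_apply]
  refine IsWeightedHomogeneous.sum _ _ _ fun σ _ => ?_
  have hprod := IsWeightedHomogeneous.prod Finset.univ _ _ fun b _ =>
    isWeightedHomogeneous_Umat_X (R := R) (σ b) b
  have hsum : ∑ b, (((σ b).rev : ℕ) - (b : ℤ)) = 0 := by
    rw [Finset.sum_sub_distrib, sub_eq_zero]
    exact Fintype.sum_equiv (σ.trans Fin.revPerm) _ _ fun b => rfl
  rw [hsum] at hprod
  rw [Units.smul_def, ← mem_weightedHomogeneousSubmodule] at *
  exact Submodule.smul_of_tower_mem _ _ hprod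

theorem coeff_single_two_dSeq_X (m : ℕ) :
    coeff (single 2 m) (dSeq (X 0) (X 1) (X 2) m : MvPolynomial (Fin 3) R) =
      Equiv.Perm.sign (Fin.revPerm : Equiv.Perm (Fin m)) := by
  have he : Function.Injective (fun _ : Fin 1 => (2 : Fin 3)) :=
    fun a b _ => Subsingleton.elim a b
  have h0 : killCompl (R := R) he (X 0) = 0 := by simp [killCompl]
  have h1 : killCompl (R := R) he (X 1) = 0 := by simp [killCompl]
  have h2 : killCompl (R := R) he (X 2) = X 0 := by
    rw [← rename_X (fun _ : Fin 1 => (2 : Fin 3)) 0, killCompl_rename_app]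
  have h := map_dSeq (killCompl (R := R) he).toRingHom (X 0) (X 1) (X 2) m
  simp only [AlgHom.toRingHom_eq_coe, RingHom.coe_coe, h0, h1, h2, dSeq_zero_zero] at h
  have := congrArg (coeff (single 0 m)) h
  rwa [coeff_killCompl, mapDomain_single, ← map_intCast (C : R →+* MvPolynomial (Fin 1) R),
    coeff_C_mul, X_pow_eq_monomial, coeff_monomial, if_pos rfl, mul_one] at this

end WeightedHomogeneous

section PowerSeries

variable {k : Type*} [Field k]

theorem coe_dSeq_X (m : ℕ) :
    ((dSeq (X 0) (X 1) (X 2) m : MvPolynomial (Fin 3) k) : MvPowerSeries (Fin 3) k) =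
      dPS k m := by
  rw [dPS, ← coeToMvPowerSeries.ringHom_apply, map_dSeq]
  simp only [coeToMvPowerSeries.ringHom_apply, coe_X]

theorem nIdeal_eq_ker : nIdeal k = RingHom.ker MvPowerSeries.constantCoeff := by
  rw [MvPowerSeries.ker_constantCoeff_eq_span_range_X, nIdeal]
  congr 1
  ext f
  simp [Fin.exists_fin_succ, eq_comm]

theorem nIdeal_isMaximal : (nIdeal k).IsMaximal := by
  rw [nIdeal_eq_ker]
  exact RingHom.ker_isMaximal_of_surjective _ fun a => ⟨MvPowerSeries.C a, by simp⟩

theorem X_mem_nIdeal (v : Fin 3) : MvPowerSeries.X v ∈ nIdeal k := by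
  simp [nIdeal_eq_ker]

theorem X_pow_mul_dPS_mem_pow (v : Fin 3) (p i : ℕ) :
    MvPowerSeries.X v ^ p * dPS k i ∈ nIdeal k ^ (p + i) := by
  rw [pow_add]
  exact Ideal.mul_mem_mul (Ideal.pow_mem_pow (X_mem_nIdeal v) p)
    (dSeq_mem_pow (X_mem_nIdeal 0) (X_mem_nIdeal 1) (X_mem_nIdeal 2) i)

theorem weight_eq_of_coeff_X_pow_mul_dPS_ne_zero {v : Fin 3} {p i : ℕ} {μ : Fin 3 →₀ ℕ}
    (h : MvPowerSeries.coeff μ (MvPowerSeries.X v ^ p * dPS k i) ≠ 0) :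
    weight xyWeight μ = p • xyWeight v := by
  rw [← coe_dSeq_X, ← coe_X, ← coe_pow, ← MvPolynomial.coe_mul, MvPolynomial.coeff_coe] at h
  simpa using ((isWeightedHomogeneous_X k xyWeight v).pow p).mul (isWeightedHomogeneous_dSeq_X i) h

theorem coeff_X_pow_mul_dPS (v : Fin 3) (p i : ℕ) :
    MvPowerSeries.coeff (single v p + single 2 i) (MvPowerSeries.X v ^ p * dPS k i) =
      ((Equiv.Perm.sign (Fin.revPerm : Equiv.Perm (Fin i)) : ℤ) : k) := by
  rw [MvPowerSeries.X_pow_eq, MvPowerSeries.coeff_add_monomial_mul, one_mul, ← coe_dSeq_X,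
    MvPolynomial.coeff_coe, coeff_single_two_dSeq_X]

end PowerSeries

section Generators

variable {k : Type*} [Field k] {m : ℕ}

def gVar (m : ℕ) (j : Fin (2 * m + 1)) : Fin 3 := if (j : ℕ) < m then 0 else 1

def gPow (m : ℕ) (j : Fin (2 * m + 1)) : ℕ :=
  if (j : ℕ) < m then m - j else if (j : ℕ) < 2 * m then 2 * m - j else 0

def gWeight (m : ℕ) (j : Fin (2 * m + 1)) : ℤ := gPow m j • xyWeight (gVar m j)

theorem gPow_le (j : Fin (2 * m + 1)) : gPow m j ≤ m := by
  unfold gPow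
  split_ifs <;> omega

theorem gWeight_injective : Function.Injective (gWeight m) := by
  intro i j h
  have hi := i.isLt
  have hj := j.isLt
  simp only [gWeight, gPow, gVar] at h
  ext
  split_ifs at h <;> simp [xyWeight] at h <;> omega

theorem gGens_eq (j : Fin (2 * m + 1)) :
    gGens k m j = MvPowerSeries.X (gVar m j) ^ gPow m j * dPS k (m - gPow m j) := by
  have hj := j.isLt
  simp only [gGens, gVar, gPow]
  split_ifs with hm hm2
  · rw [Nat.sub_sub_self hm.le]
  · rw [show 2 * m - j = m - (j - m) by omega, Nat.sub_sub_self (by omega)]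
  · simp

theorem gGens_mem_pow (j : Fin (2 * m + 1)) : gGens k m j ∈ nIdeal k ^ m := by
  rw [gGens_eq]
  simpa [Nat.add_sub_cancel' (gPow_le j)] using
    X_pow_mul_dPS_mem_pow (k := k) (gVar m j) (gPow m j) (m - gPow m j)

theorem gIdeal_le_pow : gIdeal k m ≤ nIdeal k ^ m :=
  Ideal.span_le.mpr (Set.range_subset_iff.mpr gGens_mem_pow)

theorem gGens_mem_gIdeal (j : Fin (2 * m + 1)) : gGens k m j ∈ gIdeal k m :=
  Ideal.subset_span ⟨j, rfl⟩

theorem weight_eq_gWeight_of_coeff_gGens_ne_zero {j : Fin (2 * m + 1)} {μ : Fin 3 →₀ ℕ}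
    (h : MvPowerSeries.coeff μ (gGens k m j) ≠ 0) : weight xyWeight μ = gWeight m j := by
  rw [gGens_eq] at h
  exact weight_eq_of_coeff_X_pow_mul_dPS_ne_zero h

theorem exists_degree_eq_coeff_gGens_ne_zero (j : Fin (2 * m + 1)) :
    ∃ μ : Fin 3 →₀ ℕ, μ.degree = m ∧ MvPowerSeries.coeff μ (gGens k m j) ≠ 0 := by
  refine ⟨single (gVar m j) (gPow m j) + single 2 (m - gPow m j), ?_, ?_⟩
  · rw [map_add, degree_single, degree_single, Nat.add_sub_cancel' (gPow_le j)]
  · rw [gGens_eq, coeff_X_pow_mul_dPS]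
    exact (isUnit_intCast_sign _).ne_zero

theorem mem_nIdeal_of_sum_mul_gGens_mem {c : Fin (2 * m + 1) → MvPowerSeries (Fin 3) k}
    (hc : ∑ i, c i * gGens k m i ∈ nIdeal k * gIdeal k m) (i : Fin (2 * m + 1)) :
    c i ∈ nIdeal k := by
  have hc' : ∑ i, c i * gGens k m i ∈ nIdeal k ^ (m + 1) :=
    pow_succ' (nIdeal k) m ▸ Ideal.mul_mono_right gIdeal_le_pow hc
  rw [nIdeal_eq_ker] at hc' ⊢
  exact MvPowerSeries.constantCoeff_eq_zero_of_sum_mul_mem_pow_ker gWeight_injective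
    (fun j => nIdeal_eq_ker (k := k) ▸ gGens_mem_pow j)
    (fun _ _ => weight_eq_gWeight_of_coeff_gGens_ne_zero)
    exists_degree_eq_coeff_gGens_ne_zero hc' i

theorem radical_gIdeal (hm : m ≠ 0) : (gIdeal k m).radical = nIdeal k := by
  have hd0 : dPS k 0 = 1 := Matrix.det_isEmpty
  have hx : MvPowerSeries.X 0 ∈ (gIdeal k m).radical :=
    ⟨m, by simpa [gGens, Nat.pos_of_ne_zero hm, hd0] using
      gGens_mem_gIdeal (k := k) (m := m) ⟨0, by omega⟩⟩
  have hy : MvPowerSeries.X 1 ∈ (gIdeal k m).radical :=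
    ⟨m, by simpa [gGens, show m < 2 * m by omega, hd0] using
      gGens_mem_gIdeal (k := k) (m := m) ⟨m, by omega⟩⟩
  have hd : dPS k m ∈ gIdeal k m := by
    simpa [gGens, show ¬2 * m < m by omega] using
      gGens_mem_gIdeal (k := k) (m := m) ⟨2 * m, by omega⟩
  refine le_antisymm ?_ ?_
  · exact nIdeal_isMaximal.isPrime.radical_le_iff.mpr
      (gIdeal_le_pow.trans (Ideal.pow_le_self hm))
  · rw [nIdeal, Ideal.span_le]
    rintro _ (rfl | rfl | rfl)
    exacts [hx, hy, mem_radical_of_dSeq_mem hx hy hd]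

end Generators

/-- For `m ≥ 2`, the ideal `𝔤_m ⊆ k[[x,y,z]]` is contained in `𝔫²`, is `𝔫`-primary,
and is minimally generated by the `2m + 1` elements `x^{m-i} d_i`, `y^{m-i} d_i`
(`0 ≤ i ≤ m-1`) and `d_m`: these elements generate `𝔤_m`, their images form a basis
of `𝔤_m / 𝔫𝔤_m` over `k`, and `μ(𝔤_m) = 2m + 1`, i.e. no fewer than `2m + 1`
elements generate `𝔤_m`. -/
theorem gIdeal_minimally_generated {k : Type*} [Field k] (m : ℕ) (hm : 2 ≤ m) :
    gIdeal k m ≤ nIdeal k ^ 2 ∧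
    (gIdeal k m).radical = nIdeal k ∧
    Ideal.span (Set.range (gGens k m)) = gIdeal k m ∧
    (∀ c : Fin (2 * m + 1) → MvPowerSeries (Fin 3) k,
      (∑ i, c i * gGens k m i) ∈ nIdeal k * gIdeal k m → ∀ i, c i ∈ nIdeal k) ∧
    (∀ (n : ℕ) (f : Fin n → MvPowerSeries (Fin 3) k),
      Ideal.span (Set.range f) = gIdeal k m → 2 * m + 1 ≤ n) := by
  have : (nIdeal k).IsMaximal := nIdeal_isMaximal
  refine ⟨gIdeal_le_pow.trans (Ideal.pow_le_pow_right hm), radical_gIdeal (by omega), rfl,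
    fun c => mem_nIdeal_of_sum_mul_gGens_mem, fun n f hf => ?_⟩
  simpa using Ideal.card_le_card_of_span_range_eq (nIdeal k)
    (fun c hc => mem_nIdeal_of_sum_mul_gGens_mem (hc ▸ Ideal.zero_mem _)) hf
end
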